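/- Let τ ∈ ℂ \ ℝ be algebraic of degree 3 over ℚ and k = ℚ(τ) ⊆ ℂ. Let Γ ⊆ k² ⊆ ℂ² be an additive subgroup that is free of rank 3 and discrete in ℂ², and let π : ℂ² → ℂ be a surjective ℂ-linear map such that π(Γ) is a lattice in ℂ. Then there exists μ ∈ ℂ, μ ≠ 0, with μ·π(Γ) ⊆ ℤ + ℤ·τ; that is, the quotient elliptic curve ℂ/π(Γ) is isogenous to ℂ/(ℤ + ℤτ). -/

import Mathlib

/-!
Since `Γ` has rank 3 and `π(Γ)` has rank 2, `π` kills some `γ ≠ 0` in `Γ ⊆ k²`, so `π` is a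
multiple `c · det(γ, -)` of a form defined over `k` and `c⁻¹ π(Γ) ⊆ k`. For nonzero `u₁, u₂ ∈ k`
the planes `u₁⁻¹ V` and `u₂⁻¹ V`, where `V = ℚ + ℚτ`, meet nontrivially in the 3-dimensional
`k`; a common `ν ≠ 0` applied to the two generators of `c⁻¹ π(Γ)` gives
`ν c⁻¹ π(Γ) ⊆ ℚ + ℚτ`, and clearing denominators lands in `ℤ + ℤτ`.
-/

open Module Submodule IntermediateField

theorem AddSubgroup.exists_ne_zero_map_eq_zero_of_finrank_lt {M N : Type*} [AddCommGroup M]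
    [AddCommGroup N] {G : AddSubgroup M} (f : M →+ N)
    (h : finrank ℤ (G.map f) < finrank ℤ G) : ∃ g ∈ G, g ≠ 0 ∧ f g = 0 := by
  by_contra! hker
  have hinj : Function.Injective (f.addSubgroupMap G) :=
    (injective_iff_map_eq_zero _).mpr fun g hg => by
      by_contra hg0
      exact hker g g.2 (by simpa using hg0) (congrArg Subtype.val hg)
  exact h.ne (AddEquiv.ofBijective _
    ⟨hinj, f.addSubgroupMap_surjective G⟩).toIntLinearEquiv.finrank_eq.symm

theorem LinearMap.exists_apply_eq_mul_det_of_apply_eq_zero {F : Type*} [Field F]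
    (π : F × F →ₗ[F] F) {γ : F × F} (hγ : γ ≠ 0) (hπγ : π γ = 0) :
    ∃ c : F, ∀ z : F × F, π z = c * (γ.2 * z.1 - γ.1 * z.2) := by
  have hπ : ∀ z : F × F, π z = z.1 * π (1, 0) + z.2 * π (0, 1) := fun z => by
    conv_lhs => rw [show z = z.1 • ((1 : F), (0 : F)) + z.2 • ((0 : F), (1 : F)) by ext <;> simp]
    rw [map_add, map_smul, map_smul, smul_eq_mul, smul_eq_mul]
  obtain ⟨u, w⟩ := γ
  rw [hπ] at hπγ
  by_cases hw : w = 0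
  · have hu : u ≠ 0 := by rintro rfl; simp_all
    have hα : π (1, 0) = 0 := by simpa [hw, hu] using hπγ
    exact ⟨-π (0, 1) / u, fun z => by rw [hπ, hα, hw]; field_simp; ring⟩
  · refine ⟨π (1, 0) / w, fun z => ?_⟩
    rw [hπ, div_mul_eq_mul_div, eq_div_iff hw]
    linear_combination z.2 * hπγ

theorem LinearMap.exists_ne_zero_mul_apply_mem_of_apply_eq_zero {E : Type*} [Field E]
    (S : Subfield E) (π : E × E →ₗ[E] E) (hπ : Function.Surjective π) {γ : E × E}
    (hγS : γ.1 ∈ S ∧ γ.2 ∈ S) (hγ : γ ≠ 0) (hπγ : π γ = 0) :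
    ∃ c ≠ 0, ∀ z : E × E, z.1 ∈ S ∧ z.2 ∈ S → c * π z ∈ S := by
  obtain ⟨c, hc⟩ := π.exists_apply_eq_mul_det_of_apply_eq_zero hγ hπγ
  have hc0 : c ≠ 0 := by
    rintro rfl
    obtain ⟨z, hz⟩ := hπ 1
    simp [hc] at hz
  refine ⟨c⁻¹, inv_ne_zero hc0, fun z hz => ?_⟩
  rw [hc, inv_mul_cancel_left₀ hc0]
  exact sub_mem (mul_mem hγS.2 hz.1) (mul_mem hγS.1 hz.2)

theorem exists_ne_zero_mul_mem_of_finrank_lt {F K : Type*} [Field F] [Field K] [Algebra F K]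
    [FiniteDimensional F K] {V : Submodule F K} (hV : finrank F K < 2 * finrank F V)
    {u₁ u₂ : K} (hu₁ : u₁ ≠ 0) (hu₂ : u₂ ≠ 0) : ∃ ν ≠ 0, u₁ * ν ∈ V ∧ u₂ * ν ∈ V := by
  let W : K → Submodule F K := fun u => V.comap (LinearMap.mulLeft F u)
  have hW : ∀ {u : K}, u ≠ 0 → finrank F (W u) = finrank F V := fun hu => by
    have h := ((LinearEquiv.smulOfNeZero K K _ hu).restrictScalars F).symm.finrank_map_eq V
    rwa [← comap_equiv_eq_map_symm] at h
  have hW₁₂ : ¬ Disjoint (W u₁) (W u₂) := fun hd => by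
    have h := finrank_add_finrank_le_of_disjoint hd
    rw [hW hu₁, hW hu₂] at h
    omega
  obtain ⟨ν, h₁, h₂, hν⟩ : ∃ ν ∈ W u₁, ν ∈ W u₂ ∧ ν ≠ 0 := by
    simpa [disjoint_def] using hW₁₂
  exact ⟨ν, hν, h₁, h₂⟩

theorem exists_nsmul_mem_span_int_of_mem_span_rat {M : Type*} [AddCommGroup M] [Module ℚ M]
    {S : Set M} {x : M} (hx : x ∈ span ℚ S) : ∃ n : ℕ, n ≠ 0 ∧ n • x ∈ span ℤ S := by
  induction hx using span_induction with
  | mem x hx => exact ⟨1, one_ne_zero, by simpa using subset_span hx⟩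
  | zero => exact ⟨1, one_ne_zero, by simp⟩
  | add x y _ _ hx hy =>
    obtain ⟨m, hm, hmx⟩ := hx
    obtain ⟨n, hn, hny⟩ := hy
    refine ⟨m * n, mul_ne_zero hm hn, ?_⟩
    rw [smul_add, mul_comm, mul_smul, mul_comm, mul_smul]
    exact add_mem (nsmul_mem hmx n) (nsmul_mem hny m)
  | smul q x _ hx =>
    obtain ⟨n, hn, hnx⟩ := hx
    refine ⟨q.den * n, mul_ne_zero q.den_ne_zero hn, ?_⟩
    have h : (q.den * n) • q • x = q.num • n • x := by
      rw [← Nat.cast_smul_eq_nsmul ℚ, ← Int.cast_smul_eq_zsmul ℚ, ← Nat.cast_smul_eq_nsmul ℚ n,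
        smul_smul, smul_smul, Nat.cast_mul, mul_right_comm, Rat.den_mul_eq_num]
    rw [h]
    exact zsmul_mem hnx _

theorem Module.Basis.exists_nsmul_apply_mem_span_int {ι G M : Type*} [Finite ι] [AddCommGroup G]
    [AddCommGroup M] [Module ℚ M] {S : Set M} (b : Basis ι ℤ G) (f : G →+ M)
    (hf : ∀ i, f (b i) ∈ span ℚ S) : ∃ n : ℕ, n ≠ 0 ∧ ∀ x, n • f x ∈ span ℤ S := by
  have := Fintype.ofFinite ι
  choose n hn0 hn using fun i => exists_nsmul_mem_span_int_of_mem_span_rat (hf i)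
  refine ⟨∏ i, n i, Finset.prod_ne_zero_iff.mpr fun i _ => hn0 i, fun x => ?_⟩
  suffices h : span ℤ (Set.range b) ≤ (span ℤ S).comap ((∏ i, n i) • f.toIntLinearMap) from
    h (b.mem_span x)
  refine span_le.mpr (Set.range_subset_iff.mpr fun i => ?_)
  obtain ⟨k, hk⟩ := Finset.dvd_prod_of_mem n (Finset.mem_univ i)
  simp only [SetLike.mem_coe, mem_comap, LinearMap.smul_apply, AddMonoidHom.coe_toIntLinearMap]
  rw [hk, mul_comm, mul_smul]
  exact nsmul_mem (hn i) k

theorem IntermediateField.finrank_span_one_gen {F E : Type*} [Field F] [Field E] [Algebra F E]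
    {α : E} (hα : α ∉ (algebraMap F E).range) :
    finrank F (span F {1, AdjoinSimple.gen F α}) = 2 := by
  rw [Set.pair_comm, ← Matrix.range_cons_cons_empty _ _ ![], finrank_span_eq_card]
  · simp
  refine linearIndependent_fin2.mpr ⟨by simp, fun a ha => hα ⟨a, ?_⟩⟩
  simpa [Algebra.smul_def] using congrArg Subtype.val ha

theorem IntermediateField.coe_mem_span_one_gen {F E : Type*} [Field F] [Field E] [Algebra F E]
    {α : E} {y : F⟮α⟯} (hy : y ∈ span F {1, AdjoinSimple.gen F α}) : (y : E) ∈ span F {1, α} := by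
  simpa [map_span, Set.image_pair] using mem_map_of_mem (f := F⟮α⟯.val.toLinearMap) hy

theorem IntermediateField.exists_ne_zero_mul_mem_span_one_gen {F E : Type*} [Field F] [Field E]
    [Algebra F E] {α : E} (hα : (minpoly F α).natDegree = 3) {u₁ u₂ : F⟮α⟯} (hu₁ : u₁ ≠ 0)
    (hu₂ : u₂ ≠ 0) :
    ∃ ν ≠ 0, u₁ * ν ∈ span F {1, AdjoinSimple.gen F α} ∧
      u₂ * ν ∈ span F {1, AdjoinSimple.gen F α} := by
  have hint : IsIntegral F α := minpoly.ne_zero_iff.mp fun h => by simp [h] at hα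
  have hα' : α ∉ (algebraMap F E).range := by
    rw [← minpoly.natDegree_eq_one_iff, hα]; norm_num
  have : FiniteDimensional F F⟮α⟯ := adjoin.finiteDimensional hint
  refine exists_ne_zero_mul_mem_of_finrank_lt ?_ hu₁ hu₂
  rw [adjoin.finrank hint, hα, finrank_span_one_gen hα']
  norm_num

theorem cubic_field_quotient_isogenous_general
    (τ : ℂ) (hdeg : (minpoly ℚ τ).natDegree = 3)
    (Γ : AddSubgroup (ℂ × ℂ))
    (hΓk : ∀ γ ∈ Γ, γ.1 ∈ IntermediateField.adjoin ℚ ({τ} : Set ℂ) ∧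
      γ.2 ∈ IntermediateField.adjoin ℚ ({τ} : Set ℂ))
    (hfree : Nonempty (Module.Basis (Fin 3) ℤ Γ))
    (π : (ℂ × ℂ) →ₗ[ℂ] ℂ) (hπ : Function.Surjective π)
    (hlf : Nonempty (Module.Basis (Fin 2) ℤ (Γ.map π.toAddMonoidHom))) :
    ∃ μ : ℂ, μ ≠ 0 ∧ ∀ x ∈ Γ.map π.toAddMonoidHom,
      ∃ a b : ℤ, μ * x = (a : ℂ) + (b : ℂ) * τ := by
  obtain ⟨bΓ⟩ := hfree
  obtain ⟨bL⟩ := hlf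
  obtain ⟨γ, hγΓ, hγ0, hπγ⟩ := AddSubgroup.exists_ne_zero_map_eq_zero_of_finrank_lt
    π.toAddMonoidHom (by rw [finrank_eq_card_basis bΓ, finrank_eq_card_basis bL]; simp)
  obtain ⟨c, hc0, hc⟩ := π.exists_ne_zero_mul_apply_mem_of_apply_eq_zero ℚ⟮τ⟯.toSubfield hπ
    (hΓk γ hγΓ) hγ0 hπγ
  have hLk : ∀ x ∈ Γ.map π.toAddMonoidHom, c * x ∈ ℚ⟮τ⟯ := by
    rintro _ ⟨z, hz, rfl⟩
    exact hc z (hΓk z hz)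
  let u : Fin 2 → ℚ⟮τ⟯ := fun i => ⟨c * bL i, hLk _ (bL i).2⟩
  have hu : ∀ i, u i ≠ 0 := fun i h =>
    bL.ne_zero i (Subtype.ext (by simpa [u, hc0] using congrArg Subtype.val h))
  obtain ⟨ν, hν0, hν⟩ := exists_ne_zero_mul_mem_span_one_gen hdeg (hu 0) (hu 1)
  have hνi : ∀ i, u i * ν ∈ span ℚ {1, AdjoinSimple.gen ℚ τ} := Fin.forall_fin_two.mpr hν
  obtain ⟨n, hn0, hn⟩ := bL.exists_nsmul_apply_mem_span_int (S := {1, τ})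
    ((AddMonoidHom.mulLeft (ν * c)).comp (AddSubgroup.subtype _))
    fun i => by
      convert coe_mem_span_one_gen (hνi i) using 1
      simp only [AddMonoidHom.coe_comp, AddMonoidHom.coe_mulLeft, AddSubgroup.coe_subtype,
        Function.comp_apply, IntermediateField.coe_mul, u]
      ring
  refine ⟨n * (ν * c), by simp [hn0, hν0, hc0], fun x hx => ?_⟩
  obtain ⟨a, b, hab⟩ := mem_span_pair.mp (hn ⟨x, hx⟩)
  exact ⟨a, b, by simpa [mul_assoc] using hab.symm⟩

/-- For a discrete rank-3 subgroup `Γ` of `ℂ²` contained in `k² = ℚ(τ)²`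
with `τ ∉ ℝ` cubic over `ℚ`, every quotient elliptic curve of `ℂ²/Γ` is isogenous to
`ℂ/(ℤ + ℤτ)`. -/
theorem cubic_field_quotient_isogenous
    (τ : ℂ) (hτR : τ.im ≠ 0) (hdeg : (minpoly ℚ τ).natDegree = 3)
    (Γ : AddSubgroup (ℂ × ℂ))
    (hΓk : ∀ γ ∈ Γ, γ.1 ∈ IntermediateField.adjoin ℚ ({τ} : Set ℂ) ∧
      γ.2 ∈ IntermediateField.adjoin ℚ ({τ} : Set ℂ))
    (hdisc : DiscreteTopology Γ) (hfree : Nonempty (Module.Basis (Fin 3) ℤ Γ))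
    (π : (ℂ × ℂ) →ₗ[ℂ] ℂ) (hπ : Function.Surjective π)
    (hld : DiscreteTopology (Γ.map π.toAddMonoidHom))
    (hlf : Nonempty (Module.Basis (Fin 2) ℤ (Γ.map π.toAddMonoidHom))) :
    ∃ μ : ℂ, μ ≠ 0 ∧ ∀ x ∈ Γ.map π.toAddMonoidHom,
      ∃ a b : ℤ, μ * x = (a : ℂ) + (b : ℂ) * τ :=
  cubic_field_quotient_isogenous_general τ hdeg Γ hΓk hfree π hπ hlf
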